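/- Let A ∈ ℝ^{d×n} with columns a₁, …, a_n, let b ∈ ℝ^d, and let ε ≥ 0 and λ ≥ ε. Fix an index i with ‖a_i‖₂ ≤ λ − ε. Then the optimal value of min_{w ∈ ℝ^n} ‖A w − b‖₂ + ε‖w‖₂ + λ‖w‖₁ equals the optimal value of the same problem with the additional constraint w_i = 0; i.e., the i-th feature can be safely discarded without affecting the optimal value. -/
import Mathlib


open Matrix

/-- Euclidean norm of a vector in `ℝ^n`. -/
noncomputable def norm2 {n : ℕ} (x : Fin n → ℝ) : ℝ := Real.sqrt (∑ i, x i ^ 2)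

/-- ℓ1 norm of a vector in `ℝ^n`. -/
noncomputable def norm1 {n : ℕ} (x : Fin n → ℝ) : ℝ := ∑ i, |x i|

lemma norm2_eq_norm {n : ℕ} (x : Fin n → ℝ) :
    norm2 x = ‖(WithLp.equiv 2 (Fin n → ℝ)).symm x‖ := by
  rw [EuclideanSpace.norm_eq]
  simp [norm2, Real.norm_eq_abs, sq_abs]

lemma norm2_nonneg {n : ℕ} (x : Fin n → ℝ) : 0 ≤ norm2 x :=
  Real.sqrt_nonneg _

lemma norm1_nonneg {n : ℕ} (x : Fin n → ℝ) : 0 ≤ norm1 x :=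
  Finset.sum_nonneg fun _ _ => abs_nonneg _

lemma norm2_add_le {n : ℕ} (x y : Fin n → ℝ) :
    norm2 (x + y) ≤ norm2 x + norm2 y := by
  simp only [norm2_eq_norm]
  rw [show (WithLp.equiv 2 (Fin n → ℝ)).symm (x + y)
      = (WithLp.equiv 2 (Fin n → ℝ)).symm x + (WithLp.equiv 2 (Fin n → ℝ)).symm y from rfl]
  exact norm_add_le _ _

lemma norm2_smul {n : ℕ} (c : ℝ) (x : Fin n → ℝ) :
    norm2 (c • x) = |c| * norm2 x := by
  simp only [norm2_eq_norm]
  rw [show (WithLp.equiv 2 (Fin n → ℝ)).symm (c • x)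
      = c • (WithLp.equiv 2 (Fin n → ℝ)).symm x from rfl]
  rw [norm_smul, Real.norm_eq_abs]

/-- Safe feature elimination: if the `i`-th column of `A` satisfies `‖a_i‖₂ ≤ λ − ε`,
then forcing `w_i = 0` does not change the optimal value of
`min_w ‖Aw − b‖₂ + ε‖w‖₂ + λ‖w‖₁`. -/
theorem safe_feature_elimination
    {d n : ℕ} (A : Matrix (Fin d) (Fin n) ℝ) (b : Fin d → ℝ)
    (ε lam : ℝ) (hε : 0 ≤ ε) (hlam : ε ≤ lam) (i : Fin n)
    (hai : norm2 (fun r => A r i) ≤ lam - ε) :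
    (⨅ w : Fin n → ℝ, norm2 (A.mulVec w - b) + ε * norm2 w + lam * norm1 w) =
      ⨅ w : {w : Fin n → ℝ // w i = 0},
        norm2 (A.mulVec w.1 - b) + ε * norm2 w.1 + lam * norm1 w.1 := by
  have hlam0 : 0 ≤ lam := hε.trans hlam
  set f : (Fin n → ℝ) → ℝ := fun w => norm2 (A.mulVec w - b) + ε * norm2 w + lam * norm1 w
    with hf
  have hfnn : ∀ w, 0 ≤ f w := by
    intro w
    have := norm2_nonneg (A.mulVec w - b)
    have := mul_nonneg hε (norm2_nonneg w)
    have := mul_nonneg hlam0 (norm1_nonneg w)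
    simp only [hf]; linarith
  have hbdd : BddBelow (Set.range f) := ⟨0, by rintro _ ⟨w, rfl⟩; exact hfnn w⟩
  have hbdd' : BddBelow (Set.range fun w : {w : Fin n → ℝ // w i = 0} => f w.1) :=
    ⟨0, by rintro _ ⟨w, rfl⟩; exact hfnn w.1⟩
  -- key inequality: zeroing out coordinate i does not increase the objective
  have key : ∀ w : Fin n → ℝ, f (Function.update w i 0) ≤ f w := by
    intro w
    set w' := Function.update w i 0 with hw'
    have hwi : w' = w + (-(w i)) • (Pi.single i (1:ℝ) : Fin n → ℝ) := by
      funext j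
      by_cases hj : j = i
      · subst hj; simp [hw']
      · simp [hw', Function.update_of_ne hj, Pi.single_apply, hj]
    have hcol : A.mulVec (Pi.single i (1:ℝ)) = fun r => A r i := by
      funext r
      simp [Matrix.mulVec, dotProduct, Pi.single_apply]
    -- norm2 of residual
    have h1 : norm2 (A.mulVec w' - b) ≤ norm2 (A.mulVec w - b) + |w i| * norm2 (fun r => A r i) := by
      have heq : A.mulVec w' - b = (A.mulVec w - b) + (-(w i)) • (fun r => A r i) := by
        rw [hwi, Matrix.mulVec_add, Matrix.mulVec_smul, hcol]
        abel
      rw [heq]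
      calc norm2 ((A.mulVec w - b) + (-(w i)) • (fun r => A r i))
          ≤ norm2 (A.mulVec w - b) + norm2 ((-(w i)) • (fun r => A r i)) := norm2_add_le _ _
        _ = norm2 (A.mulVec w - b) + |w i| * norm2 (fun r => A r i) := by
            rw [norm2_smul, abs_neg]
    -- norm2 monotone under zeroing
    have h2 : norm2 w' ≤ norm2 w := by
      apply Real.sqrt_le_sqrt
      apply Finset.sum_le_sum
      intro j _
      by_cases hj : j = i
      · subst hj; simp [hw']; positivity
      · simp [hw', Function.update_of_ne hj]
    -- norm1
    have h3 : norm1 w' = norm1 w - |w i| := by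
      simp only [norm1]
      rw [eq_sub_iff_add_eq, ← Finset.sum_add_sum_compl {i} (fun j => |w j|),
        ← Finset.sum_add_sum_compl {i} (fun j => |w' j|)]
      have e1 : ∑ j ∈ ({i} : Finset (Fin n)), |w' j| = 0 := by simp [hw']
      have e2 : ∑ j ∈ ({i} : Finset (Fin n)), |w j| = |w i| := by simp
      have e3 : ∑ j ∈ ({i} : Finset (Fin n))ᶜ, |w' j| = ∑ j ∈ ({i} : Finset (Fin n))ᶜ, |w j| := by
        apply Finset.sum_congr rfl
        intro j hj
        simp only [Finset.mem_compl, Finset.mem_singleton] at hj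
        rw [hw', Function.update_of_ne hj]
      rw [e1, e2, e3]; ring
    have habs : 0 ≤ |w i| := abs_nonneg _
    have hN' : 0 ≤ norm2 (fun r => A r i) := norm2_nonneg _
    simp only [hf]
    rw [h3]
    nlinarith [mul_le_mul_of_nonneg_left hai habs]
  haveI : Nonempty {w : Fin n → ℝ // w i = 0} := ⟨⟨0, rfl⟩⟩
  apply le_antisymm
  · exact le_ciInf fun w => ciInf_le hbdd w.1
  · apply le_ciInf
    intro w
    have hw0 : Function.update w i 0 i = 0 := by simp
    calc (⨅ w : {w : Fin n → ℝ // w i = 0}, f w.1)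
        ≤ f (Function.update w i 0) := ciInf_le hbdd' ⟨Function.update w i 0, hw0⟩
      _ ≤ f w := key w
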